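/- Let G be a finite (or more generally locally finite) k-regular bipartite graph with parts A and B, k ≥ 2, and let M be a matching in G with no augmenting paths of length ≤ K, where K is odd. Define Y_0 ⊆ A ∪ B to be the set of M-uncovered vertices, Y_i = N_G(Y_{i−1}) for odd i, and Y_i = N_M(Y_{i−1}) for even i (where N_G denotes graph neighbourhood and N_M denotes the set of M-partners). Then, measuring sets by cardinality: |Y_1| ≥ (k/(k−1))|Y_0|, and for each odd i with 1 < i ≤ K, k|Y_i| ≥ (k + (i−1)/2)|Y_1|; consequently |Y_K| ≥ (1 + (K−1)/(2k))·((k+1)/k)·|Y_0|. -/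

import Mathlib

variable {V : Type*}

/-- The list of edges of a path given by its list of vertices. -/
def pathEdges (p : List V) : List (Sym2 V) :=
  List.zipWith (fun a b => s(a, b)) p p.tail

/-- `M` is a matching in `G`: a set of edges of `G` no two of which share a vertex. -/
def IsMatching (G : SimpleGraph V) (M : Set (Sym2 V)) : Prop :=
  M ⊆ G.edgeSet ∧ ∀ e ∈ M, ∀ f ∈ M, e ≠ f → ∀ v : V, v ∈ e → v ∉ f

/-- A vertex is covered by `M` if it is incident with some edge of `M`. -/
def Covered (M : Set (Sym2 V)) (v : V) : Prop :=
  ∃ e ∈ M, v ∈ e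

/-- `p` (a list of vertices) is an augmenting path for the matching `M` in `G`:
a simple path whose edges alternate out of/in `M` (starting and ending with a
non-matching edge, so it has an odd number of edges, i.e. an even number of
vertices) and whose endpoints are uncovered by `M`. -/
def IsAugPath (G : SimpleGraph V) (M : Set (Sym2 V)) (p : List V) : Prop :=
  p.Nodup ∧ p.Chain' G.Adj ∧ 2 ≤ p.length ∧ p.length % 2 = 0 ∧
  (∀ (i : ℕ) (h : i < (pathEdges p).length),
      ((pathEdges p).get ⟨i, h⟩ ∈ M ↔ i % 2 = 1)) ∧
  (∀ v : V, p.head? = some v ∨ p.getLast? = some v → ¬ Covered M v)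

open scoped Classical

/-- Graph neighbourhood of a finite set of vertices. -/
noncomputable def NG [Fintype V] (G : SimpleGraph V) (S : Finset V) : Finset V :=
  Finset.univ.filter fun v => ∃ u ∈ S, G.Adj u v

/-- Set of `M`-partners of a finite set of vertices. -/
noncomputable def NM [Fintype V] (M : Set (Sym2 V)) (S : Finset V) : Finset V :=
  Finset.univ.filter fun v => ∃ u ∈ S, s(u, v) ∈ M

/-- The set of vertices not covered by `M`. -/
noncomputable def uncov [Fintype V] (M : Set (Sym2 V)) : Finset V :=
  Finset.univ.filter fun v => ¬ Covered M v

/-- The sequence `Y_0 = ` uncovered vertices, `Y_i = N_G(Y_{i-1})` for odd `i`,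
`Y_i = N_M(Y_{i-1})` for even `i > 0`. -/
noncomputable def Ychain [Fintype V] (G : SimpleGraph V) (M : Set (Sym2 V)) : ℕ → Finset V
  | 0 => uncov M
  | i + 1 => if (i + 1) % 2 = 1 then NG G (Ychain G M i) else NM M (Ychain G M i)

/-!
Tracing the construction of `Y_j` backwards, an uncovered vertex of `Y_j` (`j` odd) would start
an alternating walk with at most `j` edges ending at another uncovered vertex; in a bipartite
graph the alternation is governed by the sides, so cutting closed subwalks out of it leaves an
augmenting path. Hence for odd `j ≤ K` the set `Y_j` is covered, `N_M` maps it injectively into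
`Y_{j+1}`, and `Y_j ⊆ Y_{j+2}`. The bounds then come from double counting edges in the
`k`-regular graph: each vertex of `Y_1` has its partner outside `Y_0`, which gives the first
bound, and `Y_0`, `Y_{j+1}` are disjoint with all their neighbours in `Y_{j+2}`, so
`|Y_{j+2}| ≥ |Y_0| + |Y_j| ≥ |Y_j| + |Y_1| / k`.
-/

open Finset

lemma List.IsChain.exists_nodup {α : Type*} {R : α → α → Prop} {x : α} {l : List α}
    (h : List.IsChain R (x :: l)) :
    ∃ l', List.IsChain R (x :: l') ∧ (x :: l').Nodup ∧
      (x :: l').getLast? = (x :: l).getLast? ∧ l'.length ≤ l.length := by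
  induction l generalizing x with
  | nil => exact ⟨[], h, List.nodup_singleton x, rfl, le_rfl⟩
  | cons y t ih =>
    obtain ⟨hxy, hyt⟩ := List.isChain_cons_cons.mp h
    obtain ⟨l', hch, hnd, hlast, hlen⟩ := ih hyt
    by_cases hx : x ∈ y :: l'
    · obtain ⟨s, u, hsu⟩ := List.append_of_mem hx
      have hsuf : x :: u <:+ y :: l' := hsu ▸ List.suffix_append s (x :: u)
      refine ⟨u, hch.infix hsuf.isInfix, hnd.sublist hsuf.sublist, ?_, ?_⟩
      · rw [List.getLast?_cons_cons, ← hlast, hsu, List.getLast?_append_cons]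
      · have := congrArg List.length hsu
        simp only [List.length_cons, List.length_append] at this ⊢
        omega
    · exact ⟨y :: l', List.isChain_cons_cons.mpr ⟨hxy, hch⟩, List.nodup_cons.mpr ⟨hx, hnd⟩,
        by simp only [List.getLast?_cons_cons, hlast], by simp [hlen]⟩

lemma length_pathEdges (p : List V) : (pathEdges p).length = p.length - 1 := by
  simp [pathEdges]

lemma getElem_pathEdges {p : List V} {i : ℕ} (h : i < (pathEdges p).length) :
    (pathEdges p)[i] = s(p[i]'(by rw [length_pathEdges] at h; omega),
      p[i + 1]'(by rw [length_pathEdges] at h; omega)) := by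
  simp [pathEdges]

section Matching

variable {G : SimpleGraph V} {M : Set (Sym2 V)}

lemma covered_iff_exists {v : V} : Covered M v ↔ ∃ u, s(v, u) ∈ M := by
  constructor
  · rintro ⟨e, he, hv⟩
    obtain ⟨u, rfl⟩ := Sym2.mem_iff_exists.mp hv
    exact ⟨u, he⟩
  · rintro ⟨u, hu⟩
    exact ⟨_, hu, Sym2.mem_mk_left v u⟩

lemma covered_of_mk_mem {u v : V} (h : s(u, v) ∈ M) : Covered M v :=
  ⟨_, h, Sym2.mem_mk_right u v⟩

lemma IsMatching.adj (hM : IsMatching G M) {u v : V} (h : s(u, v) ∈ M) : G.Adj u v :=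
  hM.1 h

lemma IsMatching.eq_of_mk_mem (hM : IsMatching G M) {u w v : V}
    (hu : s(u, v) ∈ M) (hw : s(w, v) ∈ M) : u = w := by
  by_cases he : s(u, v) = s(w, v)
  · rcases Sym2.eq_iff.mp he with ⟨h, -⟩ | ⟨rfl, -⟩
    · exact h
    · exact absurd rfl (hM.adj hu).ne
  · exact absurd (Sym2.mem_mk_right w v) (hM.2 _ hu _ hw he v (Sym2.mem_mk_right u v))

end Matching

section AlternatingPaths

variable {G : SimpleGraph V} {M : Set (Sym2 V)} {S : Set V}

lemma mem_iff_even_of_isChain (hS : ∀ x y, G.Adj x y → (x ∈ S ↔ y ∉ S)) {x : V}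
    {l : List V} (hp : List.IsChain G.Adj (x :: l)) (hx : x ∈ S) :
    ∀ (i : ℕ) (hi : i < (x :: l).length), (x :: l)[i] ∈ S ↔ Even i
  | 0, _ => by simpa using hx
  | i + 1, hi => by
    rw [Nat.even_add_one, ← mem_iff_even_of_isChain hS hp hx i (by omega),
      hS _ _ (hp.getElem i hi), not_not]

/-- With `S` a colour class of the bipartition, an `M`-alternating walk that starts in `S`
with a non-matching edge is the same as a chain of `AltStep G M S`: it leaves `S` along
non-matching edges and returns to `S` along matching ones. -/
def AltStep (G : SimpleGraph V) (M : Set (Sym2 V)) (S : Set V) (x y : V) : Prop :=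
  G.Adj x y ∧ (s(x, y) ∈ M ↔ x ∉ S)

lemma isAugPath_of_isChain_altStep (hS : ∀ x y, G.Adj x y → (x ∈ S ↔ y ∉ S)) {x y : V}
    {l : List V} (hch : List.IsChain (AltStep G M S) (x :: l)) (hnd : (x :: l).Nodup)
    (hxS : x ∈ S) (hx : ¬Covered M x) (hlast : (x :: l).getLast? = some y) (hyS : y ∉ S)
    (hy : ¬Covered M y) : IsAugPath G M (x :: l) := by
  have hadj : List.IsChain G.Adj (x :: l) := hch.imp fun _ _ h => h.1
  have hside := mem_iff_even_of_isChain hS hadj hxS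
  have hy' : (x :: l)[l.length] = y := by
    rw [List.getLast?_eq_getElem?] at hlast
    simpa using hlast
  have hl : l ≠ [] := by
    rintro rfl
    exact hyS (hy' ▸ hxS)
  refine ⟨hnd, hadj, ?_, ?_, fun i hi => ?_, ?_⟩
  · simpa [Nat.succ_le_iff, List.length_pos_iff] using hl
  · have := (hside l.length (by simp)).not.mp (hy' ▸ hyS)
    rw [Nat.not_even_iff_odd, Nat.odd_iff] at this
    simp only [List.length_cons]
    omega
  · rw [List.get_eq_getElem, getElem_pathEdges, (hch.getElem i _).2, hside, Nat.not_even_iff]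
  · rintro v (hv | hv)
    · obtain rfl : x = v := by simpa using hv
      exact hx
    · obtain rfl : y = v := by simpa [hlast] using hv
      exact hy

end AlternatingPaths

section Ychain

variable [Fintype V] {G : SimpleGraph V} {M : Set (Sym2 V)}

lemma mem_NG {S : Finset V} {v : V} : v ∈ NG G S ↔ ∃ u ∈ S, G.Adj u v := by
  simp [NG]

lemma mem_NM {S : Finset V} {v : V} : v ∈ NM M S ↔ ∃ u ∈ S, s(u, v) ∈ M := by
  simp [NM]

lemma mem_uncov {v : V} : v ∈ uncov M ↔ ¬Covered M v := by
  simp [uncov]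

lemma Ychain_odd (m : ℕ) : Ychain G M (2 * m + 1) = NG G (Ychain G M (2 * m)) := by
  rw [Ychain, if_pos (by omega)]

lemma Ychain_even (m : ℕ) : Ychain G M (2 * (m + 1)) = NM M (Ychain G M (2 * m + 1)) := by
  rw [show 2 * (m + 1) = 2 * m + 1 + 1 by ring, Ychain, if_neg (by omega)]

lemma covered_of_mem_Ychain_even {m : ℕ} {v : V} (hv : v ∈ Ychain G M (2 * (m + 1))) :
    Covered M v := by
  rw [Ychain_even, mem_NM] at hv
  obtain ⟨u, -, hu⟩ := hv
  exact covered_of_mk_mem hu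

lemma Ychain_odd_subset_Ychain_odd_succ (hM : IsMatching G M) {m : ℕ}
    (hcov : ∀ v ∈ Ychain G M (2 * m + 1), Covered M v) :
    Ychain G M (2 * m + 1) ⊆ Ychain G M (2 * (m + 1) + 1) := by
  intro v hv
  obtain ⟨u, hu⟩ := covered_iff_exists.mp (hcov v hv)
  rw [Ychain_odd, Ychain_even, mem_NG]
  exact ⟨u, mem_NM.mpr ⟨v, hv, hu⟩, hM.adj (Sym2.eq_swap ▸ hu)⟩

lemma Ychain_one_subset (hM : IsMatching G M) {m : ℕ}
    (hcov : ∀ i < m, ∀ v ∈ Ychain G M (2 * i + 1), Covered M v) :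
    Ychain G M 1 ⊆ Ychain G M (2 * m + 1) := by
  induction m with
  | zero => rfl
  | succ m ih =>
    exact (ih fun i hi => hcov i (by omega)).trans
      (Ychain_odd_subset_Ychain_odd_succ hM (hcov m (by omega)))

lemma card_le_card_NM (hM : IsMatching G M) {S : Finset V} (hcov : ∀ v ∈ S, Covered M v) :
    #S ≤ #(NM M S) := by
  simpa using card_mul_le_card_mul (fun u v => s(u, v) ∈ M) (m := 1) (n := 1)
    (fun u hu => by
      obtain ⟨v, hv⟩ := covered_iff_exists.mp (hcov u hu)
      exact one_le_card.mpr ⟨v, (mem_bipartiteAbove _).mpr ⟨mem_NM.mpr ⟨u, hu, hv⟩, hv⟩⟩)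
    (fun v _ => card_le_one.mpr fun u hu w hw =>
      hM.eq_of_mk_mem ((mem_bipartiteBelow _).mp hu).2 ((mem_bipartiteBelow _).mp hw).2)

end Ychain

section AugmentingPaths

variable [Fintype V] {G : SimpleGraph V} {M : Set (Sym2 V)} {S : Set V}

lemma exists_isChain_altStep (hS : ∀ x y, G.Adj x y → (x ∈ S ↔ y ∉ S))
    (hM : IsMatching G M) (m : ℕ) :
    ∀ w ∈ Ychain G M (2 * m + 1), w ∈ S → ∃ l : List V,
      List.IsChain (AltStep G M S) (w :: l) ∧ l.length ≤ 2 * m + 1 ∧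
      ∃ v, (w :: l).getLast? = some v ∧ v ∉ S ∧ ¬Covered M v := by
  induction m with
  | zero =>
    intro w hw hwS
    obtain ⟨u, hu, huw⟩ := mem_NG.mp hw
    have hunc : ¬Covered M u := mem_uncov.mp hu
    have hnm : s(w, u) ∉ M := fun h => hunc (covered_of_mk_mem h)
    exact ⟨[u], List.isChain_pair.mpr ⟨huw.symm, iff_of_false hnm (not_not.mpr hwS)⟩,
      le_rfl, u, rfl, (hS _ _ huw.symm).mp hwS, hunc⟩
  | succ m ih =>
    intro w hw hwS
    rw [Ychain_odd, mem_NG] at hw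
    obtain ⟨u, hu, huw⟩ := hw
    rw [Ychain_even, mem_NM] at hu
    obtain ⟨w', hw', hw'u⟩ := hu
    by_cases hwu : s(w, u) ∈ M
    · -- `w` is the matching partner of `u`, so it already lies in `Y_{2m+1}`
      obtain rfl := hM.eq_of_mk_mem hwu hw'u
      obtain ⟨l, hch, hlen, hend⟩ := ih w hw' hwS
      exact ⟨l, hch, by omega, hend⟩
    · have huS : u ∉ S := (hS _ _ huw.symm).mp hwS
      have hw'S : w' ∈ S := by simpa [huS] using hS _ _ (hM.adj hw'u).symm
      obtain ⟨l, hch, hlen, v, hlast, hend⟩ := ih w' hw' hw'S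
      refine ⟨u :: w' :: l, ?_, by simp only [List.length_cons]; omega, v, ?_, hend⟩
      · refine List.isChain_cons_cons.mpr ⟨⟨huw.symm, iff_of_false hwu (not_not.mpr hwS)⟩,
          List.isChain_cons_cons.mpr ⟨⟨(hM.adj hw'u).symm, ?_⟩, hch⟩⟩
        exact iff_of_true (Sym2.eq_swap ▸ hw'u) huS
      · rwa [List.getLast?_cons_cons, List.getLast?_cons_cons]

lemma covered_of_mem_Ychain_odd (hS : ∀ x y, G.Adj x y → (x ∈ S ↔ y ∉ S))
    (hM : IsMatching G M) {K : ℕ} (hno : ∀ p : List V, IsAugPath G M p → ¬p.length ≤ K + 1)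
    {m : ℕ} (hm : 2 * m + 1 ≤ K) : ∀ w ∈ Ychain G M (2 * m + 1), Covered M w := by
  suffices key : ∀ T : Set V, (∀ x y, G.Adj x y → (x ∈ T ↔ y ∉ T)) →
      ∀ w ∈ Ychain G M (2 * m + 1), w ∈ T → Covered M w by
    intro w hw
    by_cases hwS : w ∈ S
    · exact key S hS w hw hwS
    · refine key Sᶜ (fun x y hxy => ?_) w hw hwS
      simp only [Set.mem_compl_iff, not_not]
      exact not_iff_comm.mp (hS x y hxy).symm
  intro T hT w hw hwT
  by_contra hwc
  obtain ⟨l, hch, hlen, v, hlast, hvT, hvc⟩ := exists_isChain_altStep hT hM m w hw hwT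
  obtain ⟨l', hch', hnd, hlast', hlen'⟩ := hch.exists_nodup
  refine hno _ (isAugPath_of_isChain_altStep hT hch' hnd hwT hwc (hlast'.trans hlast) hvT hvc) ?_
  simp only [List.length_cons]
  omega

end AugmentingPaths

section Counting

variable [Fintype V] {G : SimpleGraph V} [DecidableRel G.Adj] {M : Set (Sym2 V)} {k : ℕ}

lemma bipartiteAbove_NG {S : Finset V} {u : V} (hu : u ∈ S) :
    (NG G S).bipartiteAbove G.Adj u = G.neighborFinset u := by
  ext w
  simpa [mem_NG] using fun huw => ⟨u, hu, huw⟩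

lemma card_bipartiteAbove_NG (hreg : G.IsRegularOfDegree k) {S : Finset V} {u : V}
    (hu : u ∈ S) : #((NG G S).bipartiteAbove G.Adj u) = k := by
  rw [bipartiteAbove_NG hu, G.card_neighborFinset_eq_degree, hreg u]

lemma card_bipartiteBelow_le (hreg : G.IsRegularOfDegree k) (T : Finset V) (w : V) :
    #(T.bipartiteBelow G.Adj w) ≤ k := by
  rw [← hreg w, ← G.card_neighborFinset_eq_degree]
  exact card_le_card fun u hu => by simpa using ((mem_bipartiteBelow _).mp hu).2.symm

lemma card_NG_le (hreg : G.IsRegularOfDegree k) (S : Finset V) : #(NG G S) ≤ #S * k := by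
  simpa using card_mul_le_card_mul' G.Adj (n := 1)
    (fun w hw => by
      obtain ⟨u, hu, huw⟩ := mem_NG.mp hw
      exact one_le_card.mpr ⟨u, (mem_bipartiteBelow _).mpr ⟨hu, huw⟩⟩)
    (fun _ hu => (card_bipartiteAbove_NG hreg hu).le)

lemma card_le_card_NG (hreg : G.IsRegularOfDegree k) (hk : 0 < k) (S : Finset V) :
    #S ≤ #(NG G S) :=
  Nat.le_of_mul_le_mul_right (card_mul_le_card_mul G.Adj
    (fun _ hu => (card_bipartiteAbove_NG hreg hu).ge)
    (fun w _ => card_bipartiteBelow_le hreg S w)) hk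

/-- Each neighbour of `S` has its matching partner outside `S`, so at most `k - 1` of its
edges come from `S`. -/
lemma card_mul_le_card_NG_mul (hreg : G.IsRegularOfDegree k) (hM : IsMatching G M)
    {S : Finset V} (hS : S ⊆ uncov M) (hcov : ∀ w ∈ NG G S, Covered M w) :
    #S * k ≤ #(NG G S) * (k - 1) := by
  refine card_mul_le_card_mul G.Adj (fun _ hu => (card_bipartiteAbove_NG hreg hu).ge)
    (fun w hw => ?_)
  obtain ⟨z, hz⟩ := covered_iff_exists.mp (hcov w hw)
  have hzS : z ∉ S := fun h => mem_uncov.mp (hS h) (covered_of_mk_mem hz)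
  have hzw : z ∈ G.neighborFinset w := (G.mem_neighborFinset w z).mpr (hM.adj hz)
  rw [← hreg w, ← G.card_neighborFinset_eq_degree, ← card_erase_of_mem hzw]
  refine card_le_card fun u hu => ?_
  obtain ⟨huS, huw⟩ := (mem_bipartiteBelow _).mp hu
  exact mem_erase.mpr ⟨fun h => hzS (h ▸ huS), (G.mem_neighborFinset w u).mpr huw.symm⟩

end Counting

section Growth

variable [Fintype V] {G : SimpleGraph V} [DecidableRel G.Adj] {M : Set (Sym2 V)} {k : ℕ}

lemma card_Ychain_zero_mul_le (hreg : G.IsRegularOfDegree k) (hM : IsMatching G M)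
    (hcov : ∀ v ∈ Ychain G M 1, Covered M v) :
    k * #(Ychain G M 0) ≤ (k - 1) * #(Ychain G M 1) := by
  rw [mul_comm, mul_comm (k - 1)]
  exact card_mul_le_card_NG_mul hreg hM subset_rfl hcov

lemma card_Ychain_zero_add_le (hreg : G.IsRegularOfDegree k) (hk : 0 < k)
    (hM : IsMatching G M) {m : ℕ} (hcov : ∀ v ∈ Ychain G M (2 * m + 1), Covered M v)
    (hsub : Ychain G M 1 ⊆ Ychain G M (2 * (m + 1) + 1)) :
    #(Ychain G M 0) + #(Ychain G M (2 * m + 1)) ≤ #(Ychain G M (2 * (m + 1) + 1)) := by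
  have hdisj : Disjoint (Ychain G M 0) (Ychain G M (2 * (m + 1))) :=
    disjoint_left.mpr fun v hv0 hv => mem_uncov.mp hv0 (covered_of_mem_Ychain_even hv)
  have hNG : NG G (Ychain G M 0 ∪ Ychain G M (2 * (m + 1))) ⊆ Ychain G M (2 * (m + 1) + 1) := by
    intro w hw
    obtain ⟨u, hu, huw⟩ := mem_NG.mp hw
    rcases mem_union.mp hu with hu | hu
    · exact hsub (mem_NG.mpr ⟨u, hu, huw⟩)
    · rw [Ychain_odd]
      exact mem_NG.mpr ⟨u, hu, huw⟩
  calc #(Ychain G M 0) + #(Ychain G M (2 * m + 1))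
      ≤ #(Ychain G M 0) + #(Ychain G M (2 * (m + 1))) := by
        rw [Ychain_even]
        exact Nat.add_le_add_left (card_le_card_NM hM hcov) _
    _ = #(Ychain G M 0 ∪ Ychain G M (2 * (m + 1))) := (card_union_of_disjoint hdisj).symm
    _ ≤ #(NG G (Ychain G M 0 ∪ Ychain G M (2 * (m + 1)))) := card_le_card_NG hreg hk _
    _ ≤ #(Ychain G M (2 * (m + 1) + 1)) := card_le_card hNG

lemma add_mul_card_Ychain_one_le (hreg : G.IsRegularOfDegree k) (hk : 0 < k)
    (hM : IsMatching G M) {m : ℕ}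
    (hcov : ∀ i < m, ∀ v ∈ Ychain G M (2 * i + 1), Covered M v) :
    (k + m) * #(Ychain G M 1) ≤ k * #(Ychain G M (2 * m + 1)) := by
  induction m with
  | zero => simp
  | succ m ih =>
    have hstep := card_Ychain_zero_add_le hreg hk hM (hcov m (by omega))
      (Ychain_one_subset hM hcov)
    have hY1 : #(Ychain G M 1) ≤ #(Ychain G M 0) * k := card_NG_le hreg _
    nlinarith [ih fun i hi => hcov i (by omega)]

end Growth

lemma succ_mul_le_of_mul_le_pred_mul {k a b : ℕ} (hk : 0 < k) (h : k * a ≤ (k - 1) * b) :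
    (k + 1) * a ≤ k * b := by
  obtain ⟨k, rfl⟩ := Nat.exists_eq_add_of_lt hk
  simp only [zero_add, Nat.add_sub_cancel] at h
  nlinarith

theorem Ychain_card_bounds_general [Fintype V]
    (G : SimpleGraph V) [DecidableRel G.Adj] (A B : Finset V)
    (hAB : ∀ v : V, ¬(v ∈ A ∧ v ∈ B))
    (hbip : ∀ u v : V, G.Adj u v → (u ∈ A ∧ v ∈ B) ∨ (u ∈ B ∧ v ∈ A))
    (k : ℕ) (hk : 2 ≤ k) (hreg : ∀ v : V, G.degree v = k)
    (M : Set (Sym2 V)) (hM : IsMatching G M)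
    (K : ℕ) (hK : K % 2 = 1)
    (hno : ∀ p : List V, IsAugPath G M p → ¬(p.length ≤ K + 1)) :
    k * (Ychain G M 0).card ≤ (k - 1) * (Ychain G M 1).card ∧
    (∀ i : ℕ, i % 2 = 1 → 1 < i → i ≤ K →
      (2 * k + (i - 1)) * (Ychain G M 1).card ≤ 2 * k * (Ychain G M i).card) ∧
    (2 * k + (K - 1)) * (k + 1) * (Ychain G M 0).card ≤
      2 * k * k * (Ychain G M K).card := by
  have hside : ∀ x y, G.Adj x y → (x ∈ (A : Set V) ↔ y ∉ (A : Set V)) := by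
    intro x y hxy
    have := hAB x
    have := hAB y
    rcases hbip x y hxy with h | h <;> simp only [mem_coe] <;> tauto
  have hcov : ∀ i, 2 * i + 1 ≤ K → ∀ v ∈ Ychain G M (2 * i + 1), Covered M v :=
    fun i hi => covered_of_mem_Ychain_odd hside hM hno hi
  have hgrowth : ∀ m, 2 * m + 1 ≤ K →
      (k + m) * #(Ychain G M 1) ≤ k * #(Ychain G M (2 * m + 1)) :=
    fun m hm => add_mul_card_Ychain_one_le hreg (by omega) hM fun i hi => hcov i (by omega)
  have hY0 := card_Ychain_zero_mul_le hreg hM (hcov 0 (by omega))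
  refine ⟨hY0, fun i hi _ hiK => ?_, ?_⟩
  · obtain ⟨m, rfl⟩ : ∃ m, i = 2 * m + 1 := ⟨i / 2, by omega⟩
    rw [Nat.add_sub_cancel]
    linarith [hgrowth m hiK]
  · obtain ⟨m, rfl⟩ : ∃ m, K = 2 * m + 1 := ⟨K / 2, by omega⟩
    rw [Nat.add_sub_cancel]
    nlinarith [succ_mul_le_of_mul_le_pred_mul (by omega) hY0, hgrowth m le_rfl]

/-- in a `k`-regular bipartite graph (`k ≥ 2`), if `M` is a matching
with no augmenting paths of length `≤ K` (edges; i.e. at most `K+1` vertices),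
`K` odd, then `|Y_1| ≥ (k/(k-1))|Y_0|`; for each odd `i` with `1 < i ≤ K`,
`k|Y_i| ≥ (k + (i-1)/2)|Y_1|`; and `|Y_K| ≥ (1 + (K-1)/(2k))((k+1)/k)|Y_0|`
(all inequalities cleared of denominators). -/
theorem Ychain_card_bounds [Fintype V] [DecidableEq V]
    (G : SimpleGraph V) [DecidableRel G.Adj] (A B : Finset V)
    (hpart : ∀ v : V, v ∈ A ∨ v ∈ B) (hAB : ∀ v : V, ¬(v ∈ A ∧ v ∈ B))
    (hbip : ∀ u v : V, G.Adj u v → (u ∈ A ∧ v ∈ B) ∨ (u ∈ B ∧ v ∈ A))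
    (k : ℕ) (hk : 2 ≤ k) (hreg : ∀ v : V, G.degree v = k)
    (M : Set (Sym2 V)) (hM : IsMatching G M)
    (K : ℕ) (hK : K % 2 = 1)
    (hno : ∀ p : List V, IsAugPath G M p → ¬(p.length ≤ K + 1)) :
    k * (Ychain G M 0).card ≤ (k - 1) * (Ychain G M 1).card ∧
    (∀ i : ℕ, i % 2 = 1 → 1 < i → i ≤ K →
      (2 * k + (i - 1)) * (Ychain G M 1).card ≤ 2 * k * (Ychain G M i).card) ∧
    (2 * k + (K - 1)) * (k + 1) * (Ychain G M 0).card ≤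
      2 * k * k * (Ychain G M K).card :=
  Ychain_card_bounds_general G A B hAB hbip k hk hreg M hM K hK hno
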